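/- Let D be the derivation of ℚ[x,y,z] with D(x)=xyz, D(y)=yz², D(z)=y²z. For every n ≥ 1, D^n(x) = x · Σ_{σ ∈ Q_n} y^{fap(σ)} z^{2n − fap(σ)}, an identity in ℚ[x,y,z]. -/

import Mathlib

/-!
Every Stirling permutation of order `n + 1` arises in exactly one way by inserting the pair
`(n+1)(n+1)` into one of the `2n + 1` gaps of a Stirling permutation `σ` of order `n`.
Inserting into a gap inside or just before an ascent-plateau, or in front of a leading plateau,
leaves `fap` unchanged, and there are exactly `fap σ` such gaps; exactly one further gap raises
`fap` by one, and the remaining `2n - fap σ` gaps raise it by two. On the other side,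
`D (x y^a z^b) = x (y^(a+1) z^(b+1) + a y^a z^(b+2) + b y^(a+2) z^b)`, and for `a = fap σ`,
`b = 2n - fap σ` the three terms match the three kinds of gaps, so the identity follows by
induction on `n`.
-/

open Finset MvPolynomial

/-- Stirling permutations of order `n`, encoded as functions `Fin (2*n) → Fin (n+1)`
in one-line notation (position `i` holds the letter `σ (i) ∈ {1,…,n}`), such that each
letter `1,…,n` occurs exactly twice and all entries between the two occurrences of a
letter are larger than that letter. -/
def StirlingSet (n : ℕ) : Finset (Fin (2*n) → Fin (n+1)) :=
  Finset.univ.filter (fun σ =>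
    (∀ v : Fin (n+1), (v : ℕ) ≠ 0 →
        (Finset.univ.filter (fun i => σ i = v)).card = 2) ∧
    (∀ i j k : Fin (2*n), i < j → j < k → σ i = σ k → σ i < σ j))

/-- The letter at position `i ∈ {1,…,2n}` of a Stirling permutation, with the
convention that positions outside this range (in particular position `0`) hold `0`. -/
def sval {n : ℕ} (σ : Fin (2*n) → Fin (n+1)) (i : ℕ) : ℕ :=
  if h : 1 ≤ i ∧ i ≤ 2*n then (σ ⟨i - 1, by omega⟩ : ℕ) else 0

/-- The number of ascent-plateaus: indices `2 ≤ i ≤ 2n-1` with `σ_{i-1} < σ_i = σ_{i+1}`. -/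
def apQ {n : ℕ} (σ : Fin (2*n) → Fin (n+1)) : ℕ :=
  ((Finset.Icc 2 (2*n - 1)).filter
    (fun i => sval σ (i-1) < sval σ i ∧ sval σ i = sval σ (i+1))).card

/-- The number of left ascent-plateaus: indices `1 ≤ i ≤ 2n-1` with
`σ_{i-1} < σ_i = σ_{i+1}`, where `σ_0 = 0`. -/
def lapQ {n : ℕ} (σ : Fin (2*n) → Fin (n+1)) : ℕ :=
  ((Finset.Icc 1 (2*n - 1)).filter
    (fun i => sval σ (i-1) < sval σ i ∧ sval σ i = sval σ (i+1))).card

/-- The number of double ascents: indices `1 ≤ i ≤ 2n-1` with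
`σ_{i-1} < σ_i < σ_{i+1}`, where `σ_0 = 0`. -/
def dascQ {n : ℕ} (σ : Fin (2*n) → Fin (n+1)) : ℕ :=
  ((Finset.Icc 1 (2*n - 1)).filter
    (fun i => sval σ (i-1) < sval σ i ∧ sval σ i < sval σ (i+1))).card

/-- The number of descent-plateaus: indices `2 ≤ i ≤ 2n-1` with
`σ_{i-1} > σ_i = σ_{i+1}`. -/
def dpQ {n : ℕ} (σ : Fin (2*n) → Fin (n+1)) : ℕ :=
  ((Finset.Icc 2 (2*n - 1)).filter
    (fun i => sval σ i < sval σ (i-1) ∧ sval σ i = sval σ (i+1))).card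

/-- The number of ascents: indices `1 ≤ i ≤ 2n-1` with `σ_i < σ_{i+1}` or `i = 1`. -/
def ascQ {n : ℕ} (σ : Fin (2*n) → Fin (n+1)) : ℕ :=
  ((Finset.Icc 1 (2*n - 1)).filter
    (fun i => sval σ i < sval σ (i+1) ∨ i = 1)).card

/-- The number of plateaus: indices `1 ≤ i ≤ 2n-1` with `σ_i = σ_{i+1}`. -/
def platQ {n : ℕ} (σ : Fin (2*n) → Fin (n+1)) : ℕ :=
  ((Finset.Icc 1 (2*n - 1)).filter (fun i => sval σ i = sval σ (i+1))).card

/-- The flag ascent-plateau number: `2·ap(σ)+1` if `σ_1 = σ_2`, and `2·ap(σ)` otherwise. -/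
def fapQ {n : ℕ} (σ : Fin (2*n) → Fin (n+1)) : ℕ :=
  if 1 ≤ n ∧ sval σ 1 = sval σ 2 then 2 * apQ σ + 1 else 2 * apQ σ


def IsStirlingSeq (n : ℕ) (f : ℕ → ℕ) : Prop :=
  (∀ v, 1 ≤ v → v ≤ n → #{k ∈ Icc 1 (2*n) | f k = v} = 2) ∧
  ∀ a b c, 1 ≤ a → a < b → b < c → c ≤ 2*n → f a = f c → f a < f b

section Words

variable {n : ℕ}

lemma sval_zero (σ : Fin (2*n) → Fin (n+1)) : sval σ 0 = 0 := by
  simp [sval]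

lemma sval_of_lt (σ : Fin (2*n) → Fin (n+1)) {k : ℕ} (hk : 2*n < k) : sval σ k = 0 := by
  unfold sval; rw [dif_neg (by omega)]

lemma sval_le (σ : Fin (2*n) → Fin (n+1)) (k : ℕ) : sval σ k ≤ n := by
  unfold sval; split
  · exact Nat.lt_succ_iff.mp (Fin.is_lt _)
  · omega

lemma sval_of_mem (σ : Fin (2*n) → Fin (n+1)) {k : ℕ} (h1 : 1 ≤ k) (h2 : k ≤ 2*n) :
    sval σ k = σ ⟨k - 1, by omega⟩ := by
  unfold sval; rw [dif_pos ⟨h1, h2⟩]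

lemma sval_succ (σ : Fin (2*n) → Fin (n+1)) (j : Fin (2*n)) : sval σ (j + 1) = σ j :=
  sval_of_mem σ (by omega) (by omega)

lemma sval_injective : Function.Injective (sval (n := n)) := fun σ τ h =>
  funext fun j => Fin.ext <| by rw [← sval_succ, ← sval_succ, h]

def ofSeq (n : ℕ) (f : ℕ → ℕ) : Fin (2*n) → Fin (n+1) :=
  fun j => ⟨min (f (j + 1)) n, Nat.lt_succ_of_le (min_le_right _ _)⟩

lemma sval_ofSeq {f : ℕ → ℕ} (h0 : f 0 = 0) (hlarge : ∀ k, 2*n < k → f k = 0)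
    (hle : ∀ k, f k ≤ n) : sval (ofSeq n f) = f := by
  funext k
  by_cases hk : 1 ≤ k ∧ k ≤ 2*n
  · rw [sval_of_mem _ hk.1 hk.2]
    simp only [ofSeq, Nat.sub_add_cancel hk.1]
    exact min_eq_left (hle k)
  · rcases Nat.eq_zero_or_pos k with rfl | hk0
    · rw [sval_zero, h0]
    · rw [sval_of_lt _ (by omega), hlarge k (by omega)]

lemma card_filter_sval_eq (σ : Fin (2*n) → Fin (n+1)) (v : Fin (n+1)) :
    #{k ∈ Icc 1 (2*n) | sval σ k = v} = #{j | σ j = v} := by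
  symm
  refine Finset.card_bij (fun j _ => (j : ℕ) + 1) (fun j hj => ?_) (fun _ _ _ _ h => ?_)
    (fun k hk => ?_)
  · simp only [mem_filter, mem_univ, true_and] at hj
    simp only [mem_filter, mem_Icc, sval_succ, hj, and_true]
    omega
  · exact Fin.ext (by omega)
  · simp only [mem_filter, mem_Icc] at hk
    refine ⟨⟨k - 1, by omega⟩, ?_, by simp only; omega⟩
    simp only [mem_filter, mem_univ, true_and]
    exact Fin.ext (by rw [← hk.2, sval_of_mem σ hk.1.1 hk.1.2])

lemma mem_stirlingSet_iff (σ : Fin (2*n) → Fin (n+1)) :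
    σ ∈ StirlingSet n ↔ IsStirlingSeq n (sval σ) := by
  simp only [StirlingSet, mem_filter, mem_univ, true_and, IsStirlingSeq]
  refine and_congr ⟨fun h v hv₁ hv₂ => ?_, fun h v hv => ?_⟩
    ⟨fun h a b c ha hab hbc hc => ?_, ?_⟩
  · simpa [card_filter_sval_eq σ ⟨v, by omega⟩] using h ⟨v, by omega⟩ (by simp; omega)
  · rw [← card_filter_sval_eq]
    exact h v (by omega) (by omega)
  · rw [sval_of_mem σ (by omega) (by omega), sval_of_mem σ (by omega) (by omega),
      sval_of_mem σ (by omega) (by omega), Fin.val_inj]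
    exact h _ _ _ (Fin.mk_lt_mk.mpr (by omega)) (Fin.mk_lt_mk.mpr (by omega))
  · intro h i j k hij hjk hik
    have := h (i + 1) (j + 1) (k + 1) (by omega) (by omega) (by omega) (by omega)
    simp only [sval_succ] at this
    exact this (congrArg _ hik)

end Words

section Pairs

def insertPair (f : ℕ → ℕ) (i m : ℕ) : ℕ → ℕ :=
  fun k => if k ≤ i then f k else if k ≤ i + 2 then m else f (k - 2)

def erasePair (f : ℕ → ℕ) (p : ℕ) : ℕ → ℕ :=
  fun k => if k < p then f k else f (k + 2)

lemma erasePair_insertPair (f : ℕ → ℕ) (i m : ℕ) :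
    erasePair (insertPair f i m) (i + 1) = f := by
  funext k
  simp only [erasePair, insertPair]
  split_ifs <;> first | rfl | omega

lemma insertPair_erasePair {f : ℕ → ℕ} {p m : ℕ} (hp : 1 ≤ p) (h₁ : f p = m)
    (h₂ : f (p + 1) = m) : insertPair (erasePair f p) (p - 1) m = f := by
  funext k
  simp only [erasePair, insertPair]
  split_ifs
  · rfl
  · omega
  · obtain rfl | rfl : k = p ∨ k = p + 1 := by omega
    exacts [h₁.symm, h₂.symm]
  · omega
  · congr 1; omega

lemma insertPair_of_le (f : ℕ → ℕ) {i k : ℕ} (m : ℕ) (hk : k ≤ i) :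
    insertPair f i m k = f k :=
  if_pos hk

lemma insertPair_of_gt (f : ℕ → ℕ) {i k : ℕ} (m : ℕ) (hk : i + 2 < k) :
    insertPair f i m k = f (k - 2) := by
  simp only [insertPair, if_neg (show ¬ k ≤ i by omega), if_neg (show ¬ k ≤ i + 2 by omega)]

lemma insertPair_succ (f : ℕ → ℕ) (i m : ℕ) : insertPair f i m (i + 1) = m := by
  simp [insertPair]

lemma insertPair_injective {f f' : ℕ → ℕ} {i i' m : ℕ} (hf : ∀ k, f k < m)
    (hf' : ∀ k, f' k < m) (h : insertPair f i m = insertPair f' i' m) : f = f' ∧ i = i' := by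
  have key : ∀ {f f' : ℕ → ℕ} {i i'}, (∀ k, f' k < m) →
      insertPair f i m = insertPair f' i' m → i' ≤ i := fun {f f' i i'} hf' h => by
    by_contra! hlt
    have := congrFun h (i + 1)
    rw [insertPair_succ, insertPair_of_le _ _ (by omega)] at this
    exact (hf' _).ne this.symm
  obtain rfl : i = i' := le_antisymm (key hf h.symm) (key hf' h)
  exact ⟨by rw [← erasePair_insertPair f i m, h, erasePair_insertPair], rfl⟩

variable {f : ℕ → ℕ} {i m : ℕ}

lemma card_filter_insertPair_eq {N v : ℕ} (hi : i ≤ N) (hv : v ≠ m) :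
    #{k ∈ Icc 1 (N + 2) | insertPair f i m k = v} = #{k ∈ Icc 1 N | f k = v} := by
  refine card_nbij' (fun k => if k ≤ i then k else k - 2) (fun k => if k ≤ i then k else k + 2)
    ?_ ?_ ?_ ?_ <;> intro k hk <;>
    simp only [coe_filter, mem_Icc, Set.mem_ofPred_eq] at hk ⊢ <;>
    (try simp only [insertPair] at hk ⊢) <;>
    split_ifs at hk ⊢ <;> (try simp only [Nat.add_sub_cancel] at hk ⊢) <;> omega

lemma card_filter_insertPair_self {N : ℕ} (hi : i ≤ N) (hf : ∀ k, f k < m) :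
    #{k ∈ Icc 1 (N + 2) | insertPair f i m k = m} = 2 := by
  have : {k ∈ Icc 1 (N + 2) | insertPair f i m k = m} = {i + 1, i + 2} := by
    ext k
    simp only [mem_filter, mem_Icc, mem_insert, mem_singleton]
    simp only [insertPair]
    have := hf k
    have := hf (k - 2)
    split_ifs <;> omega
  rw [this, card_pair (by omega)]

lemma insertPair_ite (f : ℕ → ℕ) (i m k : ℕ) :
    insertPair f i m (if k ≤ i then k else k + 2) = f k := by
  split_ifs with hk
  · exact insertPair_of_le f m hk
  · rw [insertPair_of_gt f m (by omega), Nat.add_sub_cancel]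

lemma isStirlingSeq_insertPair_iff {n : ℕ} (hf : ∀ k, f k ≤ n) (hi : i ≤ 2*n) :
    IsStirlingSeq (n + 1) (insertPair f i (n + 1)) ↔ IsStirlingSeq n f := by
  have hlt : ∀ k, f k < n + 1 := fun k => Nat.lt_succ_of_le (hf k)
  unfold IsStirlingSeq
  rw [show 2 * (n + 1) = 2*n + 2 by ring]
  refine and_congr ⟨fun h v hv₁ hv₂ => ?_, fun h v hv₁ hv₂ => ?_⟩
    ⟨fun h a b c ha hab hbc hc hac => ?_, fun h a b c ha hab hbc hc hac => ?_⟩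
  · rw [← card_filter_insertPair_eq (m := n + 1) hi (by omega)]
    exact h v hv₁ (by omega)
  · obtain hv | rfl : v ≤ n ∨ v = n + 1 := by omega
    · rw [card_filter_insertPair_eq hi (by omega)]
      exact h v hv₁ hv
    · exact card_filter_insertPair_self hi hlt
  · have := h (if a ≤ i then a else a + 2) (if b ≤ i then b else b + 2)
      (if c ≤ i then c else c + 2) (by split_ifs <;> omega) (by split_ifs <;> omega)
      (by split_ifs <;> omega) (by split_ifs <;> omega)
    simp only [insertPair_ite] at this
    exact this hac
  · have := hlt a; have := hlt (a - 2); have := hlt b; have := hlt (b - 2)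
    have := hlt c; have := hlt (c - 2)
    simp only [insertPair] at hac ⊢
    split_ifs at hac ⊢ <;>
      first | omega | exact h _ _ _ (by omega) (by omega) (by omega) (by omega) hac

end Pairs

lemma IsStirlingSeq.exists_max_pair {n : ℕ} {f : ℕ → ℕ} (hf : IsStirlingSeq n f)
    (hle : ∀ k, f k ≤ n) (hn : 1 ≤ n) :
    ∃ p, 1 ≤ p ∧ p < 2*n ∧ f p = n ∧ f (p + 1) = n ∧
      ∀ k ∈ Icc 1 (2*n), f k = n → k = p ∨ k = p + 1 := by
  obtain ⟨a, b, hab, hS⟩ := card_eq_two.mp (hf.1 n hn le_rfl)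
  have hmem : ∀ k, k ∈ Icc 1 (2*n) ∧ f k = n ↔ k = a ∨ k = b := fun k => by
    simpa only [mem_filter, mem_insert, mem_singleton, eq_iff_iff] using congrArg (k ∈ ·) hS
  wlog hlt : a < b generalizing a b
  · exact this b a hab.symm (by rw [hS, pair_comm]) (fun k => (hmem k).trans or_comm) (by omega)
  obtain ⟨ha, hfa⟩ := (hmem a).2 (.inl rfl)
  obtain ⟨hb, hfb⟩ := (hmem b).2 (.inr rfl)
  have hba : b = a + 1 := by
    by_contra hne
    have := hf.2 a (a + 1) b (mem_Icc.mp ha).1 (by omega) (by omega) (mem_Icc.mp hb).2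
      (hfa.trans hfb.symm)
    have := hle (a + 1)
    omega
  subst hba
  refine ⟨a, (mem_Icc.mp ha).1, by have := mem_Icc.mp hb; omega, hfa, hfb,
    fun k hk hfk => (hmem k).1 ⟨hk, hfk⟩⟩

section Insertion

variable {n : ℕ}

def insertMax (σ : Fin (2*n) → Fin (n+1)) (i : ℕ) : Fin (2*(n+1)) → Fin (n+1+1) :=
  ofSeq (n + 1) (insertPair (sval σ) i (n + 1))

lemma sval_insertMax (σ : Fin (2*n) → Fin (n+1)) {i : ℕ} (hi : i ≤ 2*n) :
    sval (insertMax σ i) = insertPair (sval σ) i (n + 1) := by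
  refine sval_ofSeq (by simp [insertPair, sval_zero]) (fun k hk => ?_) (fun k => ?_) <;>
    simp only [insertPair]
  · rw [if_neg (by omega), if_neg (by omega), sval_of_lt σ (by omega)]
  · have := sval_le σ k
    have := sval_le σ (k - 2)
    split_ifs <;> omega

lemma insertMax_mem {σ : Fin (2*n) → Fin (n+1)} (hσ : σ ∈ StirlingSet n) {i : ℕ}
    (hi : i ≤ 2*n) : insertMax σ i ∈ StirlingSet (n + 1) := by
  rw [mem_stirlingSet_iff, sval_insertMax σ hi, isStirlingSeq_insertPair_iff (sval_le σ) hi]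
  exact (mem_stirlingSet_iff σ).mp hσ

lemma exists_insertMax_eq {τ : Fin (2*(n+1)) → Fin (n+1+1)} (hτ : τ ∈ StirlingSet (n + 1)) :
    ∃ σ ∈ StirlingSet n, ∃ i ≤ 2*n, insertMax σ i = τ := by
  obtain ⟨p, hp₁, hp₂, hgp, hgp', huniq⟩ :=
    ((mem_stirlingSet_iff τ).mp hτ).exists_max_pair (sval_le τ) (by omega)
  have hne : ∀ k, k ≠ p → k ≠ p + 1 → sval τ k ≤ n := fun k h₁ h₂ => by
    have := sval_le τ k
    by_contra hgk
    replace hgk : sval τ k = n + 1 := by omega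
    have hk : k ∈ Icc 1 (2*(n+1)) := by
      rw [mem_Icc]
      by_contra hk
      rcases Nat.eq_zero_or_pos k with rfl | _
      · rw [sval_zero] at hgk; omega
      · rw [sval_of_lt τ (by omega)] at hgk; omega
    rcases huniq k hk hgk with rfl | rfl <;> contradiction
  set f := erasePair (sval τ) p
  have hf₀ : f 0 = 0 := by simp only [f, erasePair, if_pos (show 0 < p by omega), sval_zero]
  have hflarge : ∀ k, 2*n < k → f k = 0 := fun k hk => by
    simp only [f, erasePair, if_neg (show ¬ k < p by omega)]
    exact sval_of_lt τ (by omega)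
  have hfle : ∀ k, f k ≤ n := fun k => by
    simp only [f, erasePair]
    split_ifs <;> exact hne _ (by omega) (by omega)
  have hτf : insertPair f (p - 1) (n + 1) = sval τ := insertPair_erasePair hp₁ hgp hgp'
  have hsval := sval_ofSeq hf₀ hflarge hfle
  refine ⟨ofSeq n f, ?_, p - 1, by omega, sval_injective ?_⟩
  · rw [mem_stirlingSet_iff, hsval, ← isStirlingSeq_insertPair_iff hfle (i := p - 1) (by omega),
      hτf]
    exact (mem_stirlingSet_iff τ).mp hτ
  · rw [sval_insertMax _ (by omega), hsval, hτf]

lemma sum_stirlingSet_succ {M : Type*} [AddCommMonoid M]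
    (g : (Fin (2*(n+1)) → Fin (n+1+1)) → M) :
    ∑ τ ∈ StirlingSet (n + 1), g τ =
      ∑ σ ∈ StirlingSet n, ∑ i ∈ range (2*n + 1), g (insertMax σ i) := by
  rw [← sum_product']
  refine (sum_nbij (fun p : _ × ℕ => insertMax p.1 p.2) (fun p hp => ?_)
    (fun p hp q hq h => ?_) (fun τ hτ => ?_) (fun _ _ => rfl)).symm
  · rw [mem_product, mem_range] at hp
    exact insertMax_mem hp.1 (by omega)
  · simp only [mem_coe, mem_product, mem_range] at hp hq
    have h' := congrArg sval h
    simp only [sval_insertMax _ (show p.2 ≤ 2*n by omega),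
      sval_insertMax _ (show q.2 ≤ 2*n by omega)] at h'
    obtain ⟨h₁, h₂⟩ := insertPair_injective (fun k => Nat.lt_succ_of_le (sval_le p.1 k))
      (fun k => Nat.lt_succ_of_le (sval_le q.1 k)) h'
    exact Prod.ext (sval_injective h₁) h₂
  · obtain ⟨σ, hσ, i, hi, rfl⟩ := exists_insertMax_eq hτ
    exact ⟨(σ, i), by simp [hσ]; omega, rfl⟩

end Insertion

section AscentPlateaus

variable {f : ℕ → ℕ} {i m : ℕ}

def IsAscPlat (f : ℕ → ℕ) (j : ℕ) : Prop :=
  f (j - 1) < f j ∧ f j = f (j + 1)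

instance : DecidablePred (IsAscPlat f) := fun _ => inferInstanceAs (Decidable (_ ∧ _))

lemma IsAscPlat.not_succ {j : ℕ} (h : IsAscPlat f j) : ¬ IsAscPlat f (j + 1) := by
  rintro ⟨h', -⟩
  rw [Nat.add_sub_cancel] at h'
  exact h'.ne h.2

lemma IsAscPlat.lt_of_eq_zero {N j : ℕ} (hf : ∀ k, N < k → f k = 0) (h : IsAscPlat f j) :
    j < N := by
  by_contra! hj
  have := h.2 ▸ h.1
  rw [hf (j + 1) (by omega)] at this
  omega

def apInd (f : ℕ → ℕ) (j : ℕ) : ℕ := if 2 ≤ j ∧ IsAscPlat f j then 1 else 0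

lemma apInd_congr {g : ℕ → ℕ} {j j' : ℕ} (hj : 2 ≤ j ↔ 2 ≤ j') (h₀ : g (j - 1) = f (j' - 1))
    (h₁ : g j = f j') (h₂ : g (j + 1) = f (j' + 1)) : apInd g j = apInd f j' := by
  have : IsAscPlat g j ↔ IsAscPlat f j' := by simp only [IsAscPlat, h₀, h₁, h₂]
  unfold apInd
  split_ifs <;> tauto

lemma apInd_insertPair_of_lt (f : ℕ → ℕ) {j : ℕ} (m : ℕ) (hj : j < i) :
    apInd (insertPair f i m) j = apInd f j :=
  apInd_congr Iff.rfl (insertPair_of_le f m (by omega)) (insertPair_of_le f m hj.le)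
    (insertPair_of_le f m (by omega))

lemma apInd_insertPair_add_four (f : ℕ → ℕ) (i m j : ℕ) :
    apInd (insertPair f i m) (i + 4 + j) = apInd f (i + 2 + j) := by
  have hshift : ∀ k, i + 2 + j - 1 ≤ k → insertPair f i m (k + 2) = f k := fun k hk => by
    rw [insertPair_of_gt f m (by omega), Nat.add_sub_cancel]
  exact apInd_congr (by omega)
    (by rw [show i + 4 + j - 1 = i + 2 + j - 1 + 2 by omega, hshift _ le_rfl])
    (by rw [show i + 4 + j = i + 2 + j + 2 by omega, hshift _ (by omega)])
    (by rw [show i + 4 + j + 1 = i + 2 + j + 1 + 2 by omega, hshift _ (by omega)])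

lemma sum_apInd_insertPair (hf : ∀ k, f k < m) (M : ℕ) :
    ∑ j ∈ range (i + 4 + M), apInd (insertPair f i m) j + apInd f i + apInd f (i + 1) =
      ∑ j ∈ range (i + 2 + M), apInd f j + if 1 ≤ i then 1 else 0 := by
  -- Below `i` nothing changes and beyond `i + 3` everything is shifted by two; of the positions
  -- `i, …, i + 3` only `i + 1`, where `f i < m = m`, is an ascent-plateau.
  have h₀ : apInd (insertPair f i m) i = 0 := by
    simp [apInd, IsAscPlat, insertPair, (hf i).ne]
  have h₁ : apInd (insertPair f i m) (i + 1) = if 1 ≤ i then 1 else 0 := by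
    simp [apInd, IsAscPlat, insertPair, hf i]
  have h₂ : apInd (insertPair f i m) (i + 2) = 0 := by
    simp [apInd, IsAscPlat, insertPair]
  have h₃ : apInd (insertPair f i m) (i + 3) = 0 := by
    simp [apInd, IsAscPlat, insertPair, (hf (i + 1)).not_gt]
  rw [sum_range_add _ (i + 4), sum_range_add _ i 4, sum_range_add _ (i + 2),
    sum_range_add _ i 2]
  simp only [sum_range_succ, sum_range_zero, apInd_insertPair_add_four]
  rw [sum_congr rfl fun j hj => apInd_insertPair_of_lt f m (mem_range.mp hj)]
  simp only [add_zero, h₀, h₁, h₂, h₃]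
  ring

lemma apInd_of_lt_two (f : ℕ → ℕ) {j : ℕ} (hj : j < 2) : apInd f j = 0 :=
  if_neg fun h => by omega

lemma apInd_add_apInd_succ_le_one (f : ℕ → ℕ) (j : ℕ) :
    apInd f j + apInd f (j + 1) ≤ 1 := by
  unfold apInd
  split_ifs with h h'
  · exact absurd h'.2 h.2.not_succ
  all_goals omega

end AscentPlateaus

section FlagAscentPlateaus

variable {n : ℕ}

lemma apQ_eq_sum (σ : Fin (2*n) → Fin (n+1)) {N : ℕ} (hN : 2*n ≤ N) :
    apQ σ = ∑ j ∈ range N, apInd (sval σ) j := by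
  have hsub : Icc 2 (2*n - 1) ⊆ range N := fun j hj => by
    rw [mem_Icc] at hj; rw [mem_range]; omega
  rw [show apQ σ = #{j ∈ Icc 2 (2*n - 1) | IsAscPlat (sval σ) j} from rfl, card_filter,
    ← sum_subset hsub fun j _ hj => ?_]
  · refine sum_congr rfl fun j hj => ?_
    simp only [apInd, (mem_Icc.mp hj).1, true_and]
  · unfold apInd
    rw [if_neg]
    rintro ⟨h₂, h⟩
    have := h.lt_of_eq_zero fun k => sval_of_lt σ
    exact hj (mem_Icc.mpr ⟨h₂, by omega⟩)

lemma apQ_insertMax (σ : Fin (2*n) → Fin (n+1)) {i : ℕ} (hi : i ≤ 2*n) :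
    apQ (insertMax σ i) + apInd (sval σ) i + apInd (sval σ) (i + 1) =
      apQ σ + if 1 ≤ i then 1 else 0 := by
  rw [apQ_eq_sum _ (N := i + 4 + 2*n) (by omega), apQ_eq_sum σ (N := i + 2 + 2*n) (by omega),
    sval_insertMax σ hi]
  exact sum_apInd_insertPair (fun k => Nat.lt_succ_of_le (sval_le σ k)) _

def IsFlagged (σ : Fin (2*n) → Fin (n+1)) : Prop := 1 ≤ n ∧ sval σ 1 = sval σ 2

instance (σ : Fin (2*n) → Fin (n+1)) : Decidable (IsFlagged σ) :=
  inferInstanceAs (Decidable (_ ∧ _))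

lemma fapQ_eq (σ : Fin (2*n) → Fin (n+1)) :
    fapQ σ = 2 * apQ σ + if IsFlagged σ then 1 else 0 := by
  unfold fapQ IsFlagged
  by_cases h : 1 ≤ n ∧ sval σ 1 = sval σ 2 <;> simp [h]

lemma isFlagged_insertMax (σ : Fin (2*n) → Fin (n+1)) {i : ℕ} (hi : i ≤ 2*n) :
    IsFlagged (insertMax σ i) ↔ i = 0 ∨ 2 ≤ i ∧ IsFlagged σ := by
  unfold IsFlagged
  rw [sval_insertMax σ hi]
  have := sval_le σ 1
  simp only [insertPair]
  split_ifs <;> omega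

lemma IsFlagged.apInd_two {σ : Fin (2*n) → Fin (n+1)} (h : IsFlagged σ) :
    apInd (sval σ) 2 = 0 :=
  if_neg fun ⟨_, h'⟩ => h'.1.ne h.2

def IsStableGap (σ : Fin (2*n) → Fin (n+1)) (i : ℕ) : Prop :=
  (i = 0 ∧ IsFlagged σ) ∨ apInd (sval σ) i = 1 ∨ apInd (sval σ) (i + 1) = 1

instance (σ : Fin (2*n) → Fin (n+1)) : DecidablePred (IsStableGap σ) :=
  fun _ => inferInstanceAs (Decidable (_ ∨ _))

def flagGap (σ : Fin (2*n) → Fin (n+1)) : ℕ := if IsFlagged σ then 1 else 0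

lemma fapQ_insertMax (σ : Fin (2*n) → Fin (n+1)) {i : ℕ} (hi : i ≤ 2*n) :
    fapQ (insertMax σ i) =
      if IsStableGap σ i then fapQ σ else if i = flagGap σ then fapQ σ + 1 else fapQ σ + 2 := by
  have hap := apQ_insertMax σ hi
  have hfl := isFlagged_insertMax σ hi
  have := apInd_add_apInd_succ_le_one (sval σ) i
  have h₀ : i < 2 → apInd (sval σ) i = 0 := apInd_of_lt_two _
  have h₁ : i = 0 → apInd (sval σ) (i + 1) = 0 := fun h => apInd_of_lt_two _ (by omega)
  have h₂ : IsFlagged σ → i = 1 → apInd (sval σ) (i + 1) = 0 := fun hF h => by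
    subst h; exact hF.apInd_two
  rw [fapQ_eq, fapQ_eq]
  unfold IsStableGap flagGap
  by_cases hF : IsFlagged σ <;> by_cases hF' : IsFlagged (insertMax σ i) <;>
    simp only [hF, hF', if_true, if_false, true_iff, false_iff, and_true, and_false, or_false,
      false_or, true_implies, false_implies, not_or] at hfl h₂ ⊢ <;>
    split_ifs at hap ⊢ <;> omega

lemma card_filter_isStableGap (σ : Fin (2*n) → Fin (n+1)) :
    #{i ∈ range (2*n + 1) | IsStableGap σ i} = fapQ σ := by
  have hind : ∀ i, (if IsStableGap σ i then 1 else 0) =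
      (if i = 0 ∧ IsFlagged σ then 1 else 0) + apInd (sval σ) i + apInd (sval σ) (i + 1) :=
    fun i => by
      have := apInd_add_apInd_succ_le_one (sval σ) i
      have h₀ : i = 0 → apInd (sval σ) i + apInd (sval σ) (i + 1) = 0 := fun h => by
        subst h; simp [apInd_of_lt_two]
      unfold IsStableGap
      by_cases hF : IsFlagged σ <;>
        simp only [hF, and_true, and_false, false_or, ↓reduceIte] <;> split_ifs <;> omega
  have hflag : ∑ i ∈ range (2*n + 1), (if i = 0 ∧ IsFlagged σ then 1 else 0) =
      if IsFlagged σ then 1 else 0 := by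
    rw [sum_range_succ']
    simp
  have hshift := sum_range_succ' (apInd (sval σ)) (2*n + 1)
  rw [← apQ_eq_sum σ (by omega), apInd_of_lt_two _ (by omega), add_zero] at hshift
  rw [card_filter, sum_congr rfl fun i _ => hind i, sum_add_distrib, sum_add_distrib, hflag,
    ← apQ_eq_sum σ (by omega), ← hshift, fapQ_eq]
  ring

lemma flagGap_mem (σ : Fin (2*n) → Fin (n+1)) :
    flagGap σ ∈ {i ∈ range (2*n + 1) | ¬ IsStableGap σ i} := by
  rw [mem_filter, mem_range]
  unfold flagGap IsStableGap
  have := apInd_of_lt_two (sval σ) (j := 0) (by omega)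
  have := apInd_of_lt_two (sval σ) (j := 1) (by omega)
  by_cases hF : IsFlagged σ
  · have := hF.apInd_two
    have := hF.1
    simp only [if_pos hF, one_ne_zero, false_and, false_or, Nat.reduceAdd]
    omega
  · simp [*]

lemma fapQ_le (σ : Fin (2*n) → Fin (n+1)) : fapQ σ ≤ 2*n := by
  have := card_filter_add_card_filter_not (s := range (2*n + 1)) (IsStableGap σ)
  have := card_pos.mpr ⟨_, flagGap_mem σ⟩
  rw [card_filter_isStableGap, card_range] at *
  omega

lemma sum_range_insertMax {M : Type*} [AddCommMonoid M] (σ : Fin (2*n) → Fin (n+1))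
    (g : ℕ → M) :
    ∑ i ∈ range (2*n + 1), g (fapQ (insertMax σ i)) =
      fapQ σ • g (fapQ σ) + g (fapQ σ + 1) + (2*n - fapQ σ) • g (fapQ σ + 2) := by
  have hcard := card_filter_add_card_filter_not (s := range (2*n + 1)) (IsStableGap σ)
  rw [card_filter_isStableGap, card_range] at hcard
  have hmem := flagGap_mem σ
  rw [sum_congr rfl fun i hi =>
      congrArg g (fapQ_insertMax σ (show i ≤ 2*n by rw [mem_range] at hi; omega)),
    ← sum_filter_add_sum_filter_not _ (IsStableGap σ), ← add_sum_erase _ _ hmem,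
    sum_congr rfl fun i hi => congrArg g (if_pos (mem_filter.mp hi).2),
    sum_congr rfl fun i hi => congrArg g
      ((if_neg (mem_filter.mp (mem_of_mem_erase hi)).2).trans (if_neg (ne_of_mem_erase hi))),
    if_neg (mem_filter.mp hmem).2, if_pos rfl, sum_const, sum_const, card_filter_isStableGap,
    card_erase_of_mem hmem, add_assoc]
  congr 3
  omega

end FlagAscentPlateaus

lemma Derivation.apply_mul_pow_mul_pow {R A : Type*} [CommSemiring R] [CommSemiring A]
    [Algebra R A] (D : Derivation R A A) {x y z : A} (hx : D x = x * y * z) (hy : D y = y * z ^ 2)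
    (hz : D z = y ^ 2 * z) (a b : ℕ) :
    D (x * (y ^ a * z ^ b)) =
      x * (y ^ (a + 1) * z ^ (b + 1) + a • (y ^ a * z ^ (b + 2)) +
        b • (y ^ (a + 2) * z ^ b)) := by
  have hpow : ∀ (w c : A) (k : ℕ), k • w ^ (k - 1) • (w * c) = k • (w ^ k * c) := by
    intro w c k
    cases k <;> simp only [zero_smul, smul_eq_mul, Nat.add_sub_cancel, pow_succ]
    ring
  rw [Derivation.leibniz, Derivation.leibniz, Derivation.leibniz_pow, Derivation.leibniz_pow, hx,
    hy, hz, show y ^ 2 * z = z * y ^ 2 by ring, hpow, hpow]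
  simp only [smul_eq_mul, nsmul_eq_mul]
  ring

lemma sum_stirlingSet_succ_monomial {A : Type*} [CommSemiring A] (y z : A) (n : ℕ) :
    ∑ τ ∈ StirlingSet (n + 1), y ^ fapQ τ * z ^ (2*(n+1) - fapQ τ) =
      ∑ σ ∈ StirlingSet n, (y ^ (fapQ σ + 1) * z ^ (2*n - fapQ σ + 1) +
        fapQ σ • (y ^ fapQ σ * z ^ (2*n - fapQ σ + 2)) +
        (2*n - fapQ σ) • (y ^ (fapQ σ + 2) * z ^ (2*n - fapQ σ))) := by
  rw [sum_stirlingSet_succ]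
  refine sum_congr rfl fun σ _ => ?_
  rw [sum_range_insertMax σ (fun a => y ^ a * z ^ (2*(n+1) - a))]
  have := fapQ_le σ
  rw [show 2*(n+1) - fapQ σ = 2*n - fapQ σ + 2 by omega,
    show 2*(n+1) - (fapQ σ + 1) = 2*n - fapQ σ + 1 by omega,
    show 2*(n+1) - (fapQ σ + 2) = 2*n - fapQ σ by omega]
  abel

theorem statement_5_general
    (D : Derivation ℚ (MvPolynomial (Fin 3) ℚ) (MvPolynomial (Fin 3) ℚ))
    (hx : D (X 0) = X 0 * X 1 * X 2)
    (hy : D (X 1) = X 1 * X 2 ^ 2)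
    (hz : D (X 2) = X 1 ^ 2 * X 2) (n : ℕ) :
    (D.toLinearMap ^ n) (X 0) =
      X 0 * ∑ σ ∈ StirlingSet n, X 1 ^ fapQ σ * X 2 ^ (2 * n - fapQ σ) := by
  induction n with
  | zero =>
    have : StirlingSet 0 = univ := by simp [StirlingSet]
    simp [this, fapQ, apQ]
  | succ n ih =>
    rw [pow_succ', Module.End.mul_apply, ih, Derivation.coeFn_coe, mul_sum, map_sum,
      sum_stirlingSet_succ_monomial, mul_sum]
    exact sum_congr rfl fun σ _ => D.apply_mul_pow_mul_pow hx hy hz _ _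

theorem statement_5
    (D : Derivation ℚ (MvPolynomial (Fin 3) ℚ) (MvPolynomial (Fin 3) ℚ))
    (hx : D (X 0) = X 0 * X 1 * X 2)
    (hy : D (X 1) = X 1 * X 2 ^ 2)
    (hz : D (X 2) = X 1 ^ 2 * X 2) (n : ℕ) (hn : 1 ≤ n) :
    (D.toLinearMap ^ n) (X 0) =
      X 0 * ∑ σ ∈ StirlingSet n, X 1 ^ fapQ σ * X 2 ^ (2 * n - fapQ σ) :=
  statement_5_general D hx hy hz n
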